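/- Let ψ^{-1} map a matching μ1 of the original school-choice instance to the matching μ2 of the JSA auxiliary instance defined, for each school c, by μ2(c') = max(μ1(c), >_c, q_c^G) and μ2(c'') = μ1(c) \ μ2(c'). Then μ1 is stable in the original instance under the joint-seat-allocation choice functions {C^JSA_c} if and only if ψ^{-1}(μ1) is stable in the JSA auxiliary instance. -/

import Mathlib

/-!
Common formalization of school-choice instances with reserved seats
(minority reserve, joint seat allocation, discovery program).

Conventions:
* `prio c s` is the priority rank of student `s` at school `c`
  (smaller value = higher priority); injectivity encodes a strict priority order.
* `pref s o` is the preference rank of outcome `o : Option C` for student `s`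
  (smaller value = more preferred); `none` denotes being unmatched, and a school
  `c` is acceptable to `s` iff `pref s (some c) < pref s none`.
-/

open Finset

structure SchoolChoice (S C : Type*) [Fintype S] [DecidableEq S] [Fintype C] [DecidableEq C] where
  /-- the set of disadvantaged (minority) students; the rest are advantaged -/
  dis : Finset S
  /-- preference rank of each outcome (school or `none` = unmatched) for each student -/
  pref : S → Option C → ℕ
  pref_inj : ∀ s, Function.Injective (pref s)
  /-- priority rank of each student at each school (lower = higher priority) -/
  prio : C → S → ℕ
  prio_inj : ∀ c, Function.Injective (prio c)
  /-- quota of each school -/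
  q : C → ℕ
  /-- reservation quota of each school -/
  qR : C → ℕ
  qR_le : ∀ c, qR c ≤ q c

namespace SchoolChoice

variable {S C : Type*} [Fintype S] [DecidableEq S] [Fintype C] [DecidableEq C]

/-- `max(T, >_c, k)`: the `min(k, |T|)` highest-priority students of `T` at school `c`. -/
def maxSet (I : SchoolChoice S C) (c : C) (T : Finset S) (k : ℕ) : Finset S :=
  T.filter fun s => (T.filter fun t => I.prio c t < I.prio c s).card < k

/-- baseline choice function `C^BASE_c` -/
def CBASE (I : SchoolChoice S C) (c : C) (T : Finset S) : Finset S :=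
  I.maxSet c T (I.q c)

/-- `S1^R` of the minority-reserve choice function -/
def mrRes (I : SchoolChoice S C) (c : C) (T : Finset S) : Finset S :=
  I.maxSet c (T ∩ I.dis) (I.qR c)

/-- minority-reserve choice function `C^MR_c` -/
def CMR (I : SchoolChoice S C) (c : C) (T : Finset S) : Finset S :=
  I.mrRes c T ∪ I.maxSet c (T \ I.mrRes c T) (I.q c - (I.mrRes c T).card)

/-- `S1^G` of the joint-seat-allocation choice function -/
def jsaGen (I : SchoolChoice S C) (c : C) (T : Finset S) : Finset S :=
  I.maxSet c T (I.q c - I.qR c)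

/-- `S1^R` of the joint-seat-allocation choice function -/
def jsaRes (I : SchoolChoice S C) (c : C) (T : Finset S) : Finset S :=
  I.maxSet c ((T ∩ I.dis) \ I.jsaGen c T) (I.qR c)

/-- joint-seat-allocation choice function `C^JSA_c` -/
def CJSA (I : SchoolChoice S C) (c : C) (T : Finset S) : Finset S :=
  I.jsaGen c T ∪ I.jsaRes c T ∪
    I.maxSet c (T \ (I.jsaGen c T ∪ I.jsaRes c T))
      (I.q c - (I.jsaGen c T ∪ I.jsaRes c T).card)

/-- school `c` is acceptable to student `s` -/
def acceptable (I : SchoolChoice S C) (s : S) (c : C) : Prop :=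
  I.pref s (some c) < I.pref s none

/-- `μ(c)`: the set of students assigned to school `c` by `μ` -/
def assigned (I : SchoolChoice S C) (μ : S → Option C) (c : C) : Finset S :=
  Finset.univ.filter fun s => μ s = some c

/-- `μ` is a matching: students are assigned only acceptable schools, quotas respected -/
def IsMatching (I : SchoolChoice S C) (μ : S → Option C) : Prop :=
  (∀ s c, μ s = some c → I.acceptable s c) ∧ ∀ c, (I.assigned μ c).card ≤ I.q c

/-- `μ` is stable w.r.t. the choice functions `Ch`: it is a matching and no pair
`(s, c)` with `c` acceptable to `s` satisfies `c >_s μ(s)` and `s ∈ Ch c (μ(c) ∪ {s})`. -/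
def IsStable (I : SchoolChoice S C) (Ch : C → Finset S → Finset S) (μ : S → Option C) : Prop :=
  I.IsMatching μ ∧
    ∀ s c, I.acceptable s c → I.pref s (some c) < I.pref s (μ s) →
      s ∉ Ch c (insert s (I.assigned μ c))

/-- `μ` is the student-optimal stable matching w.r.t. `Ch`:
stable and weakly preferred by every student to every stable matching. -/
def IsOptStable (I : SchoolChoice S C) (Ch : C → Finset S → Finset S) (μ : S → Option C) :
    Prop :=
  I.IsStable Ch μ ∧ ∀ μ', I.IsStable Ch μ' → ∀ s, I.pref s (μ s) ≤ I.pref s (μ' s)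

/-! Restricted (sub)instances, used by the three-stage discovery program: only students
in `A` participate and school `c` has quota `q' c`, with baseline (responsive) choice
functions. -/

def IsMatchingOn (I : SchoolChoice S C) (A : Finset S) (q' : C → ℕ) (μ : S → Option C) :
    Prop :=
  (∀ s, s ∉ A → μ s = none) ∧
    (∀ s c, μ s = some c → I.acceptable s c) ∧ ∀ c, (I.assigned μ c).card ≤ q' c

def IsStableOn (I : SchoolChoice S C) (A : Finset S) (q' : C → ℕ) (μ : S → Option C) : Prop :=
  I.IsMatchingOn A q' μ ∧
    ∀ s ∈ A, ∀ c : C, I.acceptable s c → I.pref s (some c) < I.pref s (μ s) →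
      s ∉ I.maxSet c (insert s (I.assigned μ c)) (q' c)

def IsOptStableOn (I : SchoolChoice S C) (A : Finset S) (q' : C → ℕ) (μ : S → Option C) :
    Prop :=
  I.IsStableOn A q' μ ∧
    ∀ μ', I.IsStableOn A q' μ' → ∀ s ∈ A, I.pref s (μ s) ≤ I.pref s (μ' s)

/-- `μ` is the discovery-program matching: the union of the three stage matchings
`μ1` (general seats, all students), `μ2` (reserved seats, unmatched disadvantaged
students), `μ3` (vacant reserved seats, unmatched advantaged students). -/
def IsDisc (I : SchoolChoice S C) (μ : S → Option C) : Prop :=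
  ∃ μ1 μ2 μ3 : S → Option C,
    I.IsOptStableOn Finset.univ (fun c => I.q c - I.qR c) μ1 ∧
    I.IsOptStableOn (I.dis.filter fun s => μ1 s = none) I.qR μ2 ∧
    I.IsOptStableOn ((Finset.univ \ I.dis).filter fun s => μ1 s = none)
      (fun c => I.qR c - (I.assigned μ2 c).card) μ3 ∧
    ∀ s, μ s = Option.elim (μ1 s) (Option.elim (μ2 s) (μ3 s) some) some

/-- `(s, c)` is a blocking pair of `μ` for disadvantaged students -/
def BlockDis (I : SchoolChoice S C) (μ : S → Option C) (s : S) (c : C) : Prop :=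
  s ∈ I.dis ∧ I.acceptable s c ∧ I.pref s (some c) < I.pref s (μ s) ∧
    ∃ s' ∈ I.assigned μ c, s' ∈ I.dis ∧ I.prio c s < I.prio c s'

/-- `(s, c)` is a blocking pair of `μ` for advantaged students -/
def BlockAdv (I : SchoolChoice S C) (μ : S → Option C) (s : S) (c : C) : Prop :=
  s ∉ I.dis ∧ I.acceptable s c ∧ I.pref s (some c) < I.pref s (μ s) ∧
    ∃ s' ∈ I.assigned μ c, s' ∉ I.dis ∧ I.prio c s < I.prio c s'

/-- `(s, c)` is an in-group blocking pair of `μ` -/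
def InGroupBlock (I : SchoolChoice S C) (μ : S → Option C) (s : S) (c : C) : Prop :=
  I.BlockDis μ s c ∨ I.BlockAdv μ s c

/-- all schools share a common priority order over the students -/
def CommonPriority (I : SchoolChoice S C) : Prop :=
  ∀ c c' : C, ∀ t u : S, I.prio c t < I.prio c u ↔ I.prio c' t < I.prio c' u

/-- the reservation quotas are a smart reserve w.r.t. the baseline matching `μBase` -/
def SmartReserve (I : SchoolChoice S C) (μBase : S → Option C) : Prop :=
  ∀ c, (I.assigned μBase c ∩ I.dis).card ≤ I.qR c

end SchoolChoice
namespace SchoolChoice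

variable {S C : Type*} [Fintype S] [DecidableEq S] [Fintype C] [DecidableEq C]

/-! Auxiliary instances: each school `c` is split into `Sum.inl c = c'` (general seats,
quota `q c - qR c`, priority `>_c`) and `Sum.inr c = c''` (reserved seats, quota `qR c`,
priority ranking all disadvantaged students above all advantaged students and each group
by `>_c`). The projection `ω` is `Sum.elim id id`. -/

/-- priority ranks of the auxiliary schools -/
def prioAux (I : SchoolChoice S C) : C ⊕ C → S → ℕ
  | Sum.inl c => I.prio c
  | Sum.inr c => fun t =>
      if t ∈ I.dis then I.prio c t else Finset.univ.sup (I.prio c) + 1 + I.prio c t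

theorem prioAux_inj (I : SchoolChoice S C) (d : C ⊕ C) :
    Function.Injective (I.prioAux d) := by
  cases d with
  | inl c => exact I.prio_inj c
  | inr c =>
    intro t u h
    simp only [prioAux] at h
    have ht := Finset.le_sup (f := I.prio c) (Finset.mem_univ t)
    have hu := Finset.le_sup (f := I.prio c) (Finset.mem_univ u)
    split_ifs at h
    · exact I.prio_inj c h
    · exact absurd h (by omega)
    · exact absurd h (by omega)
    · exact I.prio_inj c (by omega)

/-- JSA auxiliary preferences: `c1' > c1'' > c2' > c2'' > ⋯` -/
def prefJSAAux (I : SchoolChoice S C) (s : S) : Option (C ⊕ C) → ℕ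
  | none => 2 * I.pref s none
  | some (Sum.inl c) => 2 * I.pref s (some c)
  | some (Sum.inr c) => 2 * I.pref s (some c) + 1

theorem prefJSAAux_inj (I : SchoolChoice S C) (s : S) :
    Function.Injective (I.prefJSAAux s) := by
  intro o1 o2 h
  rcases o1 with _ | (c1 | c1) <;> rcases o2 with _ | (c2 | c2) <;>
    simp only [prefJSAAux] at h
  · rfl
  · exact absurd
      (I.pref_inj s (show I.pref s none = I.pref s (some c2) by omega)) (by simp)
  · exact absurd h (by omega)
  · exact absurd
      (I.pref_inj s (show I.pref s (some c1) = I.pref s none by omega)) (by simp)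
  · rw [Option.some.inj
      (I.pref_inj s (show I.pref s (some c1) = I.pref s (some c2) by omega))]
  · exact absurd h (by omega)
  · exact absurd h (by omega)
  · exact absurd h (by omega)
  · rw [Option.some.inj
      (I.pref_inj s (show I.pref s (some c1) = I.pref s (some c2) by omega))]

/-- a bound strictly larger than all preference ranks of student `s` -/
def prefB (I : SchoolChoice S C) (s : S) : ℕ := Finset.univ.sup (I.pref s) + 1

/-- DISC auxiliary preferences: `c1' > ⋯ > ck' > c1'' > ⋯ > ck''`
(acceptable general copies first, then acceptable reserved copies, then being
unmatched, then the copies of unacceptable schools). -/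
def prefDISCAux (I : SchoolChoice S C) (s : S) : Option (C ⊕ C) → ℕ
  | none => 2 * I.prefB s
  | some (Sum.inl c) =>
      if I.pref s (some c) < I.pref s none then I.pref s (some c)
      else 2 * I.prefB s + 1 + I.pref s (some c)
  | some (Sum.inr c) =>
      if I.pref s (some c) < I.pref s none then I.prefB s + I.pref s (some c)
      else 3 * I.prefB s + 1 + I.pref s (some c)

theorem prefDISCAux_inj (I : SchoolChoice S C) (s : S) :
    Function.Injective (I.prefDISCAux s) := by
  have hb : ∀ o : Option C, I.pref s o < I.prefB s := by
    intro o
    have := Finset.le_sup (f := I.pref s) (Finset.mem_univ o)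
    simp only [prefB]
    omega
  intro o1 o2 h
  have hn := hb none
  rcases o1 with _ | (c1 | c1) <;> rcases o2 with _ | (c2 | c2) <;>
    simp only [prefDISCAux] at h <;> try split_ifs at h
  all_goals try rfl
  all_goals
    first
    | exact absurd h (by first
        | (have := hb (some c1); have := hb (some c2); omega)
        | (have := hb (some c1); omega)
        | (have := hb (some c2); omega))
    | rw [Option.some.inj (I.pref_inj s
        (show I.pref s (some c1) = I.pref s (some c2) by
          have := hb (some c1); have := hb (some c2); omega))]

/-- the JSA auxiliary instance -/
def jsaAux (I : SchoolChoice S C) : SchoolChoice S (C ⊕ C) where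
  dis := I.dis
  pref := I.prefJSAAux
  pref_inj := I.prefJSAAux_inj
  prio := I.prioAux
  prio_inj := I.prioAux_inj
  q := Sum.elim (fun c => I.q c - I.qR c) I.qR
  qR := fun _ => 0
  qR_le := fun _ => Nat.zero_le _

/-- the DISC auxiliary instance -/
def discAux (I : SchoolChoice S C) : SchoolChoice S (C ⊕ C) :=
  { I.jsaAux with pref := I.prefDISCAux, pref_inj := I.prefDISCAux_inj }

/-- `ψ⁻¹`: transform a matching of the original instance into a matching of the
JSA auxiliary instance: `μ2(c') = max(μ1(c), >_c, q_c^G)`, `μ2(c'') = μ1(c) \ μ2(c')`. -/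
def psiInv (I : SchoolChoice S C) (μ : S → Option C) (s : S) : Option (C ⊕ C) :=
  match μ s with
  | none => none
  | some c =>
      if s ∈ I.maxSet c (I.assigned μ c) (I.q c - I.qR c) then some (Sum.inl c)
      else some (Sum.inr c)

end SchoolChoice

/-!
`C^JSA_c` is a sequential choice: from `X` it first takes `S^G`, the `q_c^G` best students under
`>_c`, and then the `q_c^R` best students of `X \ S^G` under `>_{c''}`. Indeed `S^R` takes the
disadvantaged ones among these, and the leftover quota `q_c − |S^G ∪ S^R|` is positive (once
`|X| > q_c^G`) only when `S^R` leaves reserved seats free for advantaged students. Hence, with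
`μ₂ = ψ⁻¹(μ)`, a student `s` is chosen by `C^JSA_c` from `μ(c) ∪ {s}` iff `c'` chooses her from
`μ₂(c') ∪ {s}` or `c''` chooses her from `μ₂(c'') ∪ {s}`; as `c'`, `c''` take the place of `c` in
her preferences, blocking pairs of `μ` and `μ₂` correspond. The one extra candidate, a student of
`μ₂(c'')` blocking with `c'`, is excluded because `μ₂(c')` holds `q_c^G` students ranked above her.
-/

namespace SchoolChoice

variable {S C : Type*} [Fintype S] [DecidableEq S] [Fintype C] [DecidableEq C]
  {I : SchoolChoice S C} {μ : S → Option C} {c : C} {d : C ⊕ C} {s : S} {T A B : Finset S}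
  {k : ℕ}

theorem mem_maxSet :
    s ∈ I.maxSet c T k ↔ s ∈ T ∧ (T.filter fun t => I.prio c t < I.prio c s).card < k :=
  Finset.mem_filter

theorem maxSet_subset : I.maxSet c T k ⊆ T := Finset.filter_subset _ _

@[simp]
theorem maxSet_empty : I.maxSet c ∅ k = ∅ := Finset.filter_empty _

@[simp]
theorem maxSet_zero : I.maxSet c T 0 = ∅ := by simp [maxSet]

theorem mem_maxSet_insert_self :
    s ∈ I.maxSet c (insert s T) k ↔ (T.filter fun t => I.prio c t < I.prio c s).card < k := by
  simp [mem_maxSet, Finset.filter_insert]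

theorem maxSet_union_of_lt (hAB : ∀ a ∈ A, ∀ b ∈ B, I.prio c a < I.prio c b) :
    I.maxSet c (A ∪ B) k = I.maxSet c A k ∪ I.maxSet c B (k - A.card) := by
  have hdisj : Disjoint A B :=
    Finset.disjoint_left.2 fun a ha hb => lt_irrefl _ (hAB a ha a hb)
  ext s
  simp only [Finset.mem_union, mem_maxSet, Finset.filter_union]
  by_cases hsA : s ∈ A
  · have hB : B.filter (fun t => I.prio c t < I.prio c s) = ∅ :=
      Finset.filter_eq_empty_iff.2 fun b hb => (hAB s hsA b hb).not_gt
    simp [hsA, Finset.disjoint_left.1 hdisj hsA, hB]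
  · by_cases hsB : s ∈ B
    · have hA : A.filter (fun t => I.prio c t < I.prio c s) = A :=
        Finset.filter_true_of_mem fun a ha => hAB a ha s hsB
      rw [Finset.card_union_of_disjoint (Finset.disjoint_filter_filter hdisj), hA]
      simp only [hsA, hsB, false_and, true_and, false_or]
      omega
    · simp [hsA, hsB]

theorem card_maxSet : (I.maxSet c T k).card = min k T.card := by
  induction T using Finset.induction_on_max_value (I.prio c) generalizing k with
  | empty => simp
  | insert a T haT hmax ih =>
    have hlt : ∀ x ∈ T, ∀ y ∈ ({a} : Finset S), I.prio c x < I.prio c y := by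
      intro x hx y hy
      rw [Finset.mem_singleton.1 hy]
      exact (hmax x hx).lt_of_ne fun h => haT (I.prio_inj c h ▸ hx)
    have hsingle : (I.maxSet c {a} (k - T.card)).card = min (k - T.card) 1 := by
      by_cases hk : k - T.card = 0
      · simp [hk]
      · simp [maxSet, Finset.filter_singleton, Nat.pos_of_ne_zero hk]
        omega
    rw [Finset.insert_eq, Finset.union_comm, maxSet_union_of_lt hlt,
      Finset.card_union_of_disjoint, ih, hsingle, Finset.card_union_of_disjoint,
      Finset.card_singleton]
    · omega
    · exact Finset.disjoint_singleton_right.2 haT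
    · exact Finset.disjoint_of_subset_left maxSet_subset
        (Finset.disjoint_of_subset_right maxSet_subset (Finset.disjoint_singleton_right.2 haT))

theorem maxSet_eq_self (h : T.card ≤ k) : I.maxSet c T k = T :=
  Finset.eq_of_subset_of_card_le maxSet_subset (by rw [card_maxSet]; omega)

theorem maxSet_eq_union_filter_lt (s : S) :
    I.maxSet c T k = I.maxSet c (T.filter fun t => I.prio c t < I.prio c s) k ∪
      I.maxSet c (T.filter fun t => ¬ I.prio c t < I.prio c s)
        (k - (T.filter fun t => I.prio c t < I.prio c s).card) := by
  conv_lhs => rw [← Finset.filter_union_filter_not_eq (fun t => I.prio c t < I.prio c s) T]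
  refine maxSet_union_of_lt fun a ha b hb => ?_
  simp only [Finset.mem_filter] at ha hb
  omega

theorem filter_maxSet_lt (s : S) :
    (I.maxSet c T k).filter (fun t => I.prio c t < I.prio c s) =
      I.maxSet c (T.filter fun t => I.prio c t < I.prio c s) k := by
  rw [maxSet_eq_union_filter_lt s, Finset.filter_union,
    Finset.filter_true_of_mem fun t ht => (Finset.mem_filter.1 (maxSet_subset ht)).2,
    Finset.filter_false_of_mem fun t ht => (Finset.mem_filter.1 (maxSet_subset ht)).2,
    Finset.union_empty]

theorem mem_maxSet_insert_maxSet :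
    s ∈ I.maxSet c (insert s (I.maxSet c T k)) k ↔ s ∈ I.maxSet c (insert s T) k := by
  rw [mem_maxSet_insert_self, mem_maxSet_insert_self, filter_maxSet_lt, card_maxSet]
  omega

theorem maxSet_insert_of_notMem (h : s ∉ I.maxSet c (insert s T) k) :
    I.maxSet c (insert s T) k = I.maxSet c T k := by
  have hk : k ≤ (T.filter fun t => I.prio c t < I.prio c s).card := by
    rw [mem_maxSet_insert_self] at h
    omega
  have hfilter : (insert s T).filter (fun t => I.prio c t < I.prio c s) =
      T.filter fun t => I.prio c t < I.prio c s := by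
    simp [Finset.filter_insert]
  rw [maxSet_eq_union_filter_lt s, maxSet_eq_union_filter_lt (T := T) s, hfilter,
    Nat.sub_eq_zero_of_le hk, maxSet_zero, maxSet_zero]

theorem maxSet_congr {D : Type*} [Fintype D] [DecidableEq D] {J : SchoolChoice S D} {e : D}
    (h : ∀ s ∈ T, ∀ t ∈ T, I.prio c t < I.prio c s ↔ J.prio e t < J.prio e s) :
    I.maxSet c T k = J.maxSet e T k :=
  Finset.filter_congr fun s hs => by rw [Finset.filter_congr fun t ht => h s hs t ht]

theorem jsaAux_prio_inr_lt_iff {t u : S} :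
    I.jsaAux.prio (Sum.inr c) t < I.jsaAux.prio (Sum.inr c) u ↔
      (t ∈ I.dis ∧ u ∉ I.dis) ∨ ((t ∈ I.dis ↔ u ∈ I.dis) ∧ I.prio c t < I.prio c u) := by
  have ht := Finset.le_sup (f := I.prio c) (Finset.mem_univ t)
  have hu := Finset.le_sup (f := I.prio c) (Finset.mem_univ u)
  change I.prioAux (Sum.inr c) t < I.prioAux (Sum.inr c) u ↔ _
  simp only [prioAux]
  split_ifs <;> simp_all <;> omega

theorem jsaAux_maxSet_inr :
    I.jsaAux.maxSet (Sum.inr c) T k =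
      I.maxSet c (T.filter (· ∈ I.dis)) k ∪
        I.maxSet c (T.filter (· ∉ I.dis)) (k - (T.filter (· ∈ I.dis)).card) := by
  conv_lhs => rw [← Finset.filter_union_filter_not_eq (· ∈ I.dis) T]
  rw [maxSet_union_of_lt]
  · congr 1 <;> refine (maxSet_congr fun u hu t ht => ?_).symm <;>
      simp_all [jsaAux_prio_inr_lt_iff]
  · simp only [Finset.mem_filter]
    intros
    simp_all [jsaAux_prio_inr_lt_iff]

theorem jsaGen_subset : I.jsaGen c T ⊆ T := maxSet_subset

theorem CJSA_eq_jsaGen_union :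
    I.CJSA c T = I.jsaGen c T ∪ I.jsaAux.maxSet (Sum.inr c) (T \ I.jsaGen c T) (I.qR c) := by
  set G := I.jsaGen c T with hG
  set Yd := (T \ G).filter (· ∈ I.dis)
  have hres : I.jsaRes c T = I.maxSet c Yd (I.qR c) := by
    unfold jsaRes
    congr 1
    ext t
    simp only [Finset.mem_sdiff, Finset.mem_inter, Finset.mem_filter, Yd, ← hG]
    tauto
  have hRsub : I.maxSet c Yd (I.qR c) ⊆ T \ G :=
    maxSet_subset.trans (Finset.filter_subset _ _)
  rw [CJSA, ← hG, hres, jsaAux_maxSet_inr, Finset.union_assoc]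
  by_cases hT : T.card ≤ I.q c - I.qR c
  · have hGT : G = T := maxSet_eq_self hT
    simp [hGT, Yd]
  have hGcard : G.card = I.q c - I.qR c := by
    rw [hG, jsaGen, card_maxSet]
    omega
  have hqR := I.qR_le c
  have hcard : (G ∪ I.maxSet c Yd (I.qR c)).card = G.card + (I.maxSet c Yd (I.qR c)).card :=
    Finset.card_union_of_disjoint
      (Finset.disjoint_of_subset_right hRsub Finset.disjoint_sdiff)
  by_cases hYd : I.qR c ≤ Yd.card
  · have hRcard : (I.maxSet c Yd (I.qR c)).card = I.qR c := by
      rw [card_maxSet]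
      omega
    rw [hcard, hGcard, hRcard, Nat.sub_eq_zero_of_le (by omega),
      Nat.sub_eq_zero_of_le hYd, maxSet_zero, maxSet_zero]
  · have hR : I.maxSet c Yd (I.qR c) = Yd := maxSet_eq_self (by omega)
    have hrest : T \ (G ∪ Yd) = (T \ G).filter (· ∉ I.dis) := by
      ext t
      simp only [Finset.mem_sdiff, Finset.mem_union, Finset.mem_filter, Yd]
      tauto
    have hquota : I.q c - (I.q c - I.qR c + Yd.card) = I.qR c - Yd.card := by omega
    rw [hR, hrest, ← hR, hcard, hGcard, hR, hquota]

theorem mem_CJSA_insert_iff :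
    s ∈ I.CJSA c (insert s T) ↔
      s ∈ I.maxSet c (insert s (I.jsaGen c T)) (I.q c - I.qR c) ∨
        s ∈ I.jsaAux.maxSet (Sum.inr c) (insert s (T \ I.jsaGen c T)) (I.qR c) := by
  rw [CJSA_eq_jsaGen_union, Finset.mem_union]
  by_cases hG : s ∈ I.jsaGen c (insert s T)
  · exact iff_of_true (Or.inl hG) (Or.inl (mem_maxSet_insert_maxSet.2 hG))
  · have hGT : I.jsaGen c (insert s T) = I.jsaGen c T := maxSet_insert_of_notMem hG
    have hG' : s ∉ I.maxSet c (insert s (I.jsaGen c T)) (I.q c - I.qR c) :=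
      mt mem_maxSet_insert_maxSet.1 hG
    rw [hGT, Finset.insert_sdiff_of_notMem _ (hGT ▸ hG)]
    simp only [hGT ▸ hG, hG', false_or]

theorem mem_assigned : s ∈ I.assigned μ c ↔ μ s = some c := by
  simp [assigned]

theorem psiInv_of_eq_some (h : μ s = some c) :
    I.psiInv μ s = if s ∈ I.jsaGen c (I.assigned μ c) then some (Sum.inl c)
      else some (Sum.inr c) := by
  unfold psiInv
  rw [h]
  rfl

theorem map_psiInv : (I.psiInv μ s).map (Sum.elim id id) = μ s := by
  rcases h : μ s with _ | c
  · simp [psiInv, h]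
  · rw [psiInv_of_eq_some h]
    split_ifs <;> rfl

theorem assigned_psiInv_inl :
    I.jsaAux.assigned (I.psiInv μ) (Sum.inl c) = I.jsaGen c (I.assigned μ c) := by
  ext s
  have hG : s ∈ I.jsaGen c (I.assigned μ c) → μ s = some c :=
    fun hG => mem_assigned.1 (jsaGen_subset hG)
  rw [mem_assigned]
  rcases h : μ s with _ | c'
  · simp_all [psiInv]
  · rw [psiInv_of_eq_some h]
    obtain rfl | hc := eq_or_ne c' c <;> split_ifs <;> simp_all

theorem assigned_psiInv_inr :
    I.jsaAux.assigned (I.psiInv μ) (Sum.inr c) =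
      I.assigned μ c \ I.jsaGen c (I.assigned μ c) := by
  ext s
  rw [mem_assigned, Finset.mem_sdiff, mem_assigned]
  rcases h : μ s with _ | c'
  · simp [psiInv, h]
  · rw [psiInv_of_eq_some h]
    obtain rfl | hc := eq_or_ne c' c <;> split_ifs <;> simp_all

theorem jsaAux_pref_div_two (o : Option (C ⊕ C)) :
    I.jsaAux.pref s o / 2 = I.pref s (o.map (Sum.elim id id)) := by
  rcases o with _ | c | c <;> simp [jsaAux, prefJSAAux]; omega

theorem jsaAux_acceptable_iff :
    I.jsaAux.acceptable s d ↔ I.acceptable s (Sum.elim id id d) := by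
  have h1 := jsaAux_pref_div_two (I := I) (s := s) (some d)
  have h2 := jsaAux_pref_div_two (I := I) (s := s) none
  have hne : I.pref s (some (Sum.elim id id d)) ≠ I.pref s none :=
    fun h => Option.some_ne_none _ (I.pref_inj s h)
  simp only [acceptable, Option.map_some, Option.map_none] at *
  omega

theorem jsaAux_pref_lt_psiInv_iff (hne : μ s ≠ some (Sum.elim id id d)) :
    I.jsaAux.pref s (some d) < I.jsaAux.pref s (I.psiInv μ s) ↔
      I.pref s (some (Sum.elim id id d)) < I.pref s (μ s) := by
  have h1 := jsaAux_pref_div_two (I := I) (s := s) (some d)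
  have h2 := jsaAux_pref_div_two (I := I) (s := s) (I.psiInv μ s)
  have hne' : I.pref s (some (Sum.elim id id d)) ≠ I.pref s (μ s) :=
    fun h => hne (I.pref_inj s h).symm
  rw [map_psiInv] at h2
  rw [Option.map_some] at h1
  omega

theorem psiInv_isMatching (hm : I.IsMatching μ) : I.jsaAux.IsMatching (I.psiInv μ) := by
  refine ⟨fun s d hd => jsaAux_acceptable_iff.2 (hm.1 s _ ?_), fun d => ?_⟩
  · simpa [hd] using (map_psiInv (I := I) (μ := μ) (s := s)).symm
  · rcases d with c | c
    · rw [assigned_psiInv_inl, jsaGen, card_maxSet]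
      exact min_le_left _ _
    · rw [assigned_psiInv_inr, Finset.card_sdiff_of_subset jsaGen_subset, jsaGen, card_maxSet]
      have := hm.2 c
      change _ ≤ I.qR c
      omega

theorem notMem_CBASE_of_pref_lt_psiInv (h : μ s = some (Sum.elim id id d))
    (hlt : I.jsaAux.pref s (some d) < I.jsaAux.pref s (I.psiInv μ s)) :
    s ∉ I.jsaAux.CBASE d (insert s (I.jsaAux.assigned (I.psiInv μ) d)) := by
  rcases d with c | c <;> simp only [Sum.elim_inl, Sum.elim_inr, id] at h
  · rw [psiInv_of_eq_some h] at hlt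
    split_ifs at hlt with hG
    · exact (lt_irrefl _ hlt).elim
    · rw [assigned_psiInv_inl]
      change s ∉ I.maxSet c (insert s (I.maxSet c _ _)) (I.q c - I.qR c)
      rwa [mem_maxSet_insert_maxSet, Finset.insert_eq_of_mem (mem_assigned.2 h)]
  · have h1 : I.jsaAux.pref s (some (Sum.inr c)) = 2 * I.pref s (some c) + 1 := rfl
    have h2 := jsaAux_pref_div_two (I := I) (s := s) (I.psiInv μ s)
    rw [map_psiInv, h] at h2
    omega

theorem mem_CJSA_insert_assigned_iff :
    s ∈ I.CJSA c (insert s (I.assigned μ c)) ↔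
      ∃ d, Sum.elim id id d = c ∧
        s ∈ I.jsaAux.CBASE d (insert s (I.jsaAux.assigned (I.psiInv μ) d)) := by
  rw [mem_CJSA_insert_iff, ← assigned_psiInv_inr, ← assigned_psiInv_inl]
  simp only [Sum.exists, Sum.elim_inl, Sum.elim_inr, id, exists_eq_left]
  rfl

end SchoolChoice

/-- a matching μ1 of the original instance is stable under the JSA choice
functions iff ψ⁻¹(μ1) is stable in the JSA auxiliary instance. -/
theorem JSA_psiInv_stable_iff {S C : Type*} [Fintype S] [DecidableEq S] [Fintype C] [DecidableEq C]
    (I : SchoolChoice S C) (μ1 : S → Option C) (hm : I.IsMatching μ1) :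
    I.IsStable I.CJSA μ1 ↔ I.jsaAux.IsStable I.jsaAux.CBASE (I.psiInv μ1) := by
  open SchoolChoice in
  constructor
  · rintro ⟨-, hstable⟩
    refine ⟨psiInv_isMatching hm, fun s d hacc hlt hmem => ?_⟩
    by_cases hown : μ1 s = some (Sum.elim id id d)
    · exact notMem_CBASE_of_pref_lt_psiInv hown hlt hmem
    · exact hstable s _ (jsaAux_acceptable_iff.1 hacc) ((jsaAux_pref_lt_psiInv_iff hown).1 hlt)
        (mem_CJSA_insert_assigned_iff.2 ⟨d, rfl, hmem⟩)
  · rintro ⟨-, hstable⟩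
    refine ⟨hm, fun s c hacc hlt hmem => ?_⟩
    obtain ⟨d, rfl, hd⟩ := mem_CJSA_insert_assigned_iff.1 hmem
    have hown : μ1 s ≠ some (Sum.elim id id d) := fun h => (h ▸ hlt).false
    exact hstable s d (jsaAux_acceptable_iff.2 hacc) ((jsaAux_pref_lt_psiInv_iff hown).2 hlt) hd
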